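/- If a ∈ [0,1], a ≠ 1/2, then the fixed points of V_13 on S² are exactly the three vertices e₁=(1,0,0), e₂=(0,1,0), e₃=(0,0,1). -/

import Mathlib

def V13 (a : ℝ) (p : ℝ × ℝ × ℝ) : ℝ × ℝ × ℝ :=
  (p.1^2 + 2*a*p.1*(1-p.1), p.2.1^2 + 2*p.2.1*p.2.2, p.2.2^2 + 2*(1-a)*p.1*(1-p.1))

def S2 : Set (ℝ × ℝ × ℝ) :=
  {p | 0 ≤ p.1 ∧ 0 ≤ p.2.1 ∧ 0 ≤ p.2.2 ∧ p.1 + p.2.1 + p.2.2 = 1}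

/-!
The first coordinate of `V13` decouples: `x² + 2a x(1-x) = x` reads `(2a - 1) x (1 - x) = 0`,
so for `a ≠ 1/2` a fixed point has `x = 0` or `x = 1`. On the face `x = 0` we have `y + z = 1`,
and the second coordinate gives `y² + 2yz - y = y (y + 2z - 1) = yz = 0`.
-/

lemma eq_zero_or_eq_one_of_V13_fst_eq {a x y z : ℝ} (ha : a ≠ 1 / 2)
    (h : (V13 a (x, y, z)).1 = x) : x = 0 ∨ x = 1 := by
  have h2a : 2 * a - 1 ≠ 0 := fun h' => ha (by linarith)
  have hx : (2 * a - 1) * (x * (1 - x)) = 0 := by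
    simp only [V13] at h
    linear_combination h
  rcases mul_eq_zero.mp ((mul_eq_zero.mp hx).resolve_left h2a) with hx | hx
  · exact Or.inl hx
  · exact Or.inr (sub_eq_zero.mp hx).symm

lemma mul_eq_zero_of_V13_snd_eq {a y z : ℝ} (hyz : y + z = 1)
    (h : (V13 a (0, y, z)).2.1 = y) : y * z = 0 := by
  simp only [V13] at h
  linear_combination h - y * hyz

lemma vertex_mem_S2_and_V13_fixed {a x y z : ℝ}
    (hv : (x, y, z) ∈ ({(1, 0, 0), (0, 1, 0), (0, 0, 1)} : Set (ℝ × ℝ × ℝ))) :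
    (x, y, z) ∈ S2 ∧ V13 a (x, y, z) = (x, y, z) := by
  rcases hv with hv | hv | hv <;> simp only [Set.mem_singleton_iff, Prod.mk.injEq] at hv <;>
    obtain ⟨rfl, rfl, rfl⟩ := hv <;> norm_num [S2, V13]

theorem V13_fixed_points (a : ℝ) (ha' : a ≠ 1/2) :
    {p ∈ S2 | V13 a p = p} =
      {((1:ℝ),(0:ℝ),(0:ℝ)), ((0:ℝ),(1:ℝ),(0:ℝ)), ((0:ℝ),(0:ℝ),(1:ℝ))} := by
  ext ⟨x, y, z⟩
  refine ⟨fun ⟨⟨_, _, _, hsum⟩, hfix⟩ => ?_, vertex_mem_S2_and_V13_fixed⟩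
  simp only [Set.mem_insert_iff, Set.mem_singleton_iff, Prod.mk.injEq]
  have hfst : (V13 a (x, y, z)).1 = x := congrArg Prod.fst hfix
  rcases eq_zero_or_eq_one_of_V13_fst_eq ha' hfst with rfl | rfl
  · have hyz : y + z = 1 := by linarith
    have hsnd : (V13 a (0, y, z)).2.1 = y := congrArg (·.2.1) hfix
    rcases mul_eq_zero.mp (mul_eq_zero_of_V13_snd_eq hyz hsnd) with rfl | rfl
    · exact Or.inr (Or.inr ⟨rfl, rfl, by linarith⟩)
    · exact Or.inr (Or.inl ⟨rfl, by linarith, rfl⟩)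
  · exact Or.inl ⟨rfl, by linarith, by linarith⟩
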